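/- arXiv:2203.01756 — 6 statements merged into one kernel-verified Lean document; each statement's English description precedes it below -/
import Mathlib

section
/- If u : ℝ^N → ℝ is measurable and ‖u‖_X = 0, then u = 0 almost everywhere in ℝ^N. -/
open MeasureTheory Set Filter
open scoped ENNReal

noncomputable section

abbrev Eucl (N : ℕ) := EuclideanSpace ℝ (Fin N)

variable {N : ℕ}

/-- `Q = ℝ^{2N} \ (CΩ)^2`. -/
def Qset (Ω : Set (Eucl N)) : Set (Eucl N × Eucl N) := (Ωᶜ ×ˢ Ωᶜ)ᶜ

/-- `φ_{x,y}(t) = a(x,y,|t|) t` for `t ≠ 0`, `φ_{x,y}(0) = 0`. -/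
def phiF (a : Eucl N → Eucl N → ℝ → ℝ) (x y : Eucl N) (t : ℝ) : ℝ :=
  if t = 0 then 0 else a x y |t| * t

/-- `Φ_{x,y}(t) = ∫₀ᵗ φ_{x,y}(τ) dτ`. -/
def PhiF (a : Eucl N → Eucl N → ℝ → ℝ) (x y : Eucl N) (t : ℝ) : ℝ :=
  ∫ τ in (0:ℝ)..t, phiF a x y τ

/-- Gagliardo-type modular on `Q` at scale `lam`. -/
def modQ (a : Eucl N → Eucl N → ℝ → ℝ) (s : ℝ) (Ω : Set (Eucl N))
    (u : Eucl N → ℝ) (lam : ℝ) : ℝ≥0∞ :=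
  ∫⁻ p in Qset Ω, ENNReal.ofReal
    (PhiF a p.1 p.2 (|u p.1 - u p.2| / (lam * dist p.1 p.2 ^ s)) / dist p.1 p.2 ^ (N : ℝ))

/-- Gagliardo-type modular on `Ω × Ω` at scale `lam`. -/
def modOO (a : Eucl N → Eucl N → ℝ → ℝ) (s : ℝ) (Ω : Set (Eucl N))
    (u : Eucl N → ℝ) (lam : ℝ) : ℝ≥0∞ :=
  ∫⁻ p in Ω ×ˢ Ω, ENNReal.ofReal
    (PhiF a p.1 p.2 (|u p.1 - u p.2| / (lam * dist p.1 p.2 ^ s)) / dist p.1 p.2 ^ (N : ℝ))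

/-- modular `∫_Ω Φ̂_x(|u|/λ)`. -/
def modO (a : Eucl N → Eucl N → ℝ → ℝ) (Ω : Set (Eucl N))
    (u : Eucl N → ℝ) (lam : ℝ) : ℝ≥0∞ :=
  ∫⁻ x in Ω, ENNReal.ofReal (PhiF a x x (|u x| / lam))

/-- modular `∫_{CΩ} β Φ̂_x(|u|/λ)`. -/
def modB (a : Eucl N → Eucl N → ℝ → ℝ) (Ω : Set (Eucl N)) (β : Eucl N → ℝ)
    (u : Eucl N → ℝ) (lam : ℝ) : ℝ≥0∞ :=
  ∫⁻ x in Ωᶜ, ENNReal.ofReal (β x * PhiF a x x (|u x| / lam))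

/-- Luxemburg infimum of a modular family (`∞` if no admissible `λ`). -/
def lux (m : ℝ → ℝ≥0∞) : ℝ≥0∞ :=
  sInf {l : ℝ≥0∞ | ∃ lam : ℝ, 0 < lam ∧ l = ENNReal.ofReal lam ∧ m lam ≤ 1}

/-- `‖u‖_X = [u]_{s,Φ,Q} + ‖u‖_{Φ̂} + ‖u‖_{Φ̂,β,CΩ}`. -/
def normX (a : Eucl N → Eucl N → ℝ → ℝ) (s : ℝ) (Ω : Set (Eucl N)) (β : Eucl N → ℝ)
    (u : Eucl N → ℝ) : ℝ≥0∞ :=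
  lux (modQ a s Ω u) + lux (modO a Ω u) + lux (modB a Ω β u)

/-- the modular `ρ_s`. -/
def rhoS (a : Eucl N → Eucl N → ℝ → ℝ) (s : ℝ) (Ω : Set (Eucl N)) (β : Eucl N → ℝ)
    (u : Eucl N → ℝ) : ℝ≥0∞ :=
  modQ a s Ω u 1 + modO a Ω u 1 + modB a Ω β u 1

/-- the modular norm `‖u‖ = inf {λ > 0 : ρ_s(u/λ) ≤ 1}`. -/
def normM (a : Eucl N → Eucl N → ℝ → ℝ) (s : ℝ) (Ω : Set (Eucl N)) (β : Eucl N → ℝ)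
    (u : Eucl N → ℝ) : ℝ≥0∞ :=
  sInf {l : ℝ≥0∞ | ∃ lam : ℝ, 0 < lam ∧ l = ENNReal.ofReal lam ∧
    rhoS a s Ω β (fun x => u x / lam) ≤ 1}

/-- `X` described via the norm `‖·‖_X`. -/
def XsetX (a : Eucl N → Eucl N → ℝ → ℝ) (s : ℝ) (Ω : Set (Eucl N)) (β : Eucl N → ℝ) :
    Set (Eucl N → ℝ) :=
  {u | Measurable u ∧ normX a s Ω β u < ⊤}

/-- `X` described via the modular norm `‖·‖`. -/
def XsetM (a : Eucl N → Eucl N → ℝ → ℝ) (s : ℝ) (Ω : Set (Eucl N)) (β : Eucl N → ℝ) :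
    Set (Eucl N → ℝ) :=
  {u | Measurable u ∧ (∃ lam : ℝ, 0 < lam ∧ rhoS a s Ω β (fun x => u x / lam) < ⊤) ∧
    normM a s Ω β u < ⊤}

/-- the fractional difference quotient `D^s u`. -/
def Du (s : ℝ) (u : Eucl N → ℝ) (p : Eucl N × Eucl N) : ℝ :=
  (u p.1 - u p.2) / dist p.1 p.2 ^ s

/-- `a(x,y,|D^s u|) D^s u`, with the convention that it vanishes when `u x = u y`. -/
def Ku (a : Eucl N → Eucl N → ℝ → ℝ) (s : ℝ) (u : Eucl N → ℝ) (p : Eucl N × Eucl N) : ℝ :=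
  if u p.1 = u p.2 then 0 else a p.1 p.2 |Du s u p| * Du s u p

/-- the form `A_s(u,v)`. -/
def Aform (a : Eucl N → Eucl N → ℝ → ℝ) (s : ℝ) (Ω : Set (Eucl N)) (β : Eucl N → ℝ)
    (u v : Eucl N → ℝ) : ℝ :=
  (1/2) * (∫ p in Qset Ω, Ku a s u p * Du s v p / dist p.1 p.2 ^ (N : ℝ))
  + (∫ x in Ω, a x x |u x| * u x * v x)
  + ∫ x in Ωᶜ, β x * (a x x |u x| * u x * v x)

/-- the nonlocal normal derivative `𝒩^s_a u` on `CΩ`. -/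
def Nop (a : Eucl N → Eucl N → ℝ → ℝ) (s : ℝ) (Ω : Set (Eucl N)) (u : Eucl N → ℝ)
    (x : Eucl N) : ℝ :=
  ∫ y in Ω, Ku a s u (x, y) / dist x y ^ ((N : ℝ) + s)

/-- `F(x,t) = ∫₀ᵗ f(x,τ) dτ`. -/
def Ff (f : Eucl N → ℝ → ℝ) (x : Eucl N) (t : ℝ) : ℝ := ∫ τ in (0:ℝ)..t, f x τ

/-- the energy functional `J_λ`. -/
def Jlam (a : Eucl N → Eucl N → ℝ → ℝ) (s : ℝ) (Ω : Set (Eucl N)) (β : Eucl N → ℝ)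
    (f : Eucl N → ℝ → ℝ) (lam : ℝ) (u : Eucl N → ℝ) : ℝ :=
  (1/2) * (modQ a s Ω u 1).toReal + (modO a Ω u 1).toReal + (modB a Ω β u 1).toReal
    - lam * ∫ x in Ω, Ff f x (u x)

/-- the variable-exponent Luxemburg norm `‖u‖_{q(·)}` on `Ω`. -/
def normq (Ω : Set (Eucl N)) (q : Eucl N → ℝ) (u : Eucl N → ℝ) : ℝ≥0∞ :=
  sInf {l : ℝ≥0∞ | ∃ lam : ℝ, 0 < lam ∧ l = ENNReal.ofReal lam ∧
    (∫⁻ x in Ω, ENNReal.ofReal (|u x / lam| ^ q x)) ≤ 1}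

open Topology

/-!
If a Luxemburg quantity vanishes, its modular is at most `1` at every scale `λ > 0`. Because
`φ_{x,y}` is strictly increasing with `φ_{x,y}(0) = 0`, `Φ_{x,y}` grows at least linearly, so the
integrand `Φ̂_x(|u x| / λ)` blows up as `λ → 0⁺` wherever `u x ≠ 0`, and Fatou's lemma forces
`u = 0` a.e. in `Ω`. In the same way the Gagliardo modular forces `u x = u y` for a.e.
`(x, y) ∈ Q`. As `Ω` has positive measure and `Ω × CΩ ⊆ Q`, fixing one good `x ∈ Ω` with
`u x = 0` gives `u = 0` a.e. in `CΩ`.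
-/

section Primitive

variable {φ : ℝ → ℝ}

theorem monotoneOn_primitive_of_monotone (hφ : Monotone φ) (hφ0 : φ 0 = 0) :
    MonotoneOn (fun t => ∫ τ in (0:ℝ)..t, φ τ) (Ici 0) := by
  intro t₁ ht₁ t₂ _ h
  have hadd := intervalIntegral.integral_add_adjacent_intervals (μ := volume) (a := 0) (b := t₁)
    (c := t₂) hφ.intervalIntegrable hφ.intervalIntegrable
  have hnonneg : 0 ≤ ∫ τ in t₁..t₂, φ τ :=
    intervalIntegral.integral_nonneg h fun τ hτ => hφ0 ▸ hφ (ht₁.trans hτ.1)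
  dsimp only
  linarith

theorem tendsto_primitive_atTop_of_strictMono (hφ : StrictMono φ) (hφ0 : φ 0 = 0) :
    Tendsto (fun t => ∫ τ in (0:ℝ)..t, φ τ) atTop atTop := by
  have hφ1 : 0 < φ 1 := hφ0 ▸ hφ one_pos
  have hlinear : ∀ t ≥ 1, φ 1 * (t - 1) ≤ ∫ τ in (0:ℝ)..t, φ τ := by
    intro t ht
    have hadd := intervalIntegral.integral_add_adjacent_intervals (μ := volume) (a := 0) (b := 1)
      (c := t) hφ.monotone.intervalIntegrable hφ.monotone.intervalIntegrable
    have h01 : 0 ≤ ∫ τ in (0:ℝ)..1, φ τ :=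
      intervalIntegral.integral_nonneg zero_le_one fun τ hτ => hφ0 ▸ hφ.monotone hτ.1
    have h1t : φ 1 * (t - 1) ≤ ∫ τ in (1:ℝ)..t, φ τ := by
      simpa [mul_comm] using intervalIntegral.integral_mono_on (μ := volume) ht
        intervalIntegrable_const hφ.monotone.intervalIntegrable fun τ hτ => hφ.monotone hτ.1
    linarith
  refine tendsto_atTop_mono' atTop (eventually_atTop.2 ⟨1, hlinear⟩) ?_
  exact (tendsto_atTop_add_const_right atTop (-1) tendsto_id).const_mul_atTop hφ1

end Primitive

theorem le_one_of_lux_eq_zero {m : ℝ → ℝ≥0∞} (hm : AntitoneOn m (Ioi 0)) (h : lux m = 0)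
    {lam : ℝ} (hlam : 0 < lam) : m lam ≤ 1 := by
  have hlt : lux m < ENNReal.ofReal lam := h ▸ ENNReal.ofReal_pos.2 hlam
  obtain ⟨-, ⟨l, hl, rfl, hml⟩, hll⟩ := sInf_lt_iff.1 hlt
  exact (hm hl hlam ((ENNReal.ofReal_lt_ofReal_iff hlam).1 hll).le).trans hml

section AeVanishing

variable {α β γ : Type*} [MeasurableSpace α] [MeasurableSpace β] {μ : Measure α}

theorem ae_not_tendsto_top_of_lintegral_le {F : ℝ → α → ℝ≥0∞}
    (hF : ∀ lam, 0 < lam → Measurable (F lam)) {C : ℝ≥0∞} (hC : C ≠ ∞)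
    (hbound : ∀ lam, 0 < lam → ∫⁻ x, F lam x ∂μ ≤ C) :
    ∀ᵐ x ∂μ, ¬ Tendsto (fun lam => F lam x) (𝓝[>] 0) (𝓝 ∞) := by
  set lam : ℕ → ℝ := fun n => ((n : ℝ) + 1)⁻¹
  have hlam_pos : ∀ n, 0 < lam n := fun n => by positivity
  have hlam : Tendsto lam atTop (𝓝[>] 0) := tendsto_inv_atTop_nhdsGT_zero.comp
    (tendsto_atTop_add_const_right atTop 1 tendsto_natCast_atTop_atTop)
  have hliminf : ∫⁻ x, liminf (fun n => F (lam n) x) atTop ∂μ ≠ ∞ :=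
    ((lintegral_liminf_le fun n => hF _ (hlam_pos n)).trans
      (liminf_le_of_frequently_le' (.of_forall fun n => hbound _ (hlam_pos n)))).trans_lt
      hC.lt_top |>.ne
  filter_upwards [ae_lt_top (.liminf fun n => hF _ (hlam_pos n)) hliminf] with x hx htop
  exact hx.ne (htop.comp hlam).liminf_eq

theorem ae_eq_of_ae_prod_eq {ν : Measure β} [SFinite ν] (hμ : μ ≠ 0) {f : α → γ} {g : β → γ}
    {c : γ} (hf : ∀ᵐ x ∂μ, f x = c) (hfg : ∀ᵐ p ∂μ.prod ν, f p.1 = g p.2) :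
    ∀ᵐ y ∂ν, g y = c := by
  have := ae_neBot.2 hμ
  obtain ⟨x, hx, hxy⟩ := (hf.and (Measure.ae_ae_of_ae_prod hfg)).exists
  filter_upwards [hxy] with y hy
  rw [← hy, hx]

end AeVanishing

section Modular

variable {a : Eucl N → Eucl N → ℝ → ℝ}

theorem phiF_zero (x y : Eucl N) : phiF a x y 0 = 0 := by
  simp [phiF]

theorem monotoneOn_PhiF {x y : Eucl N} (hmono : Monotone (phiF a x y)) :
    MonotoneOn (PhiF a x y) (Ici 0) :=
  monotoneOn_primitive_of_monotone hmono (phiF_zero x y)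

theorem tendsto_PhiF_div_nhdsGT_zero {x y : Eucl N} (hmono : StrictMono (phiF a x y))
    {r : ℝ} (hr : 0 < r) : Tendsto (fun lam => PhiF a x y (r / lam)) (𝓝[>] 0) atTop :=
  (tendsto_primitive_atTop_of_strictMono hmono (phiF_zero x y)).comp
    (tendsto_inv_nhdsGT_zero.const_mul_atTop hr)

theorem measurable_PhiF {α : Type*} [MeasurableSpace α]
    (ha : Measurable fun p : Eucl N × Eucl N × ℝ => a p.1 p.2.1 p.2.2)
    {x y : α → Eucl N} (hx : Measurable x) (hy : Measurable y)
    {g : α → ℝ} (hg : Measurable g) (hg0 : ∀ z, 0 ≤ g z) :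
    Measurable fun z => PhiF a (x z) (y z) (g z) := by
  have hphi : Measurable fun q : α × ℝ => phiF a (x q.1) (y q.1) q.2 :=
    Measurable.ite (measurableSet_eq_fun measurable_snd measurable_const) measurable_const
      ((ha.comp ((hx.comp measurable_fst).prodMk
        ((hy.comp measurable_fst).prodMk measurable_snd.abs))).mul measurable_snd)
  have hS : MeasurableSet {q : α × ℝ | q.2 ∈ Ioc 0 (g q.1)} :=
    (measurableSet_lt measurable_const measurable_snd).inter
      (measurableSet_le measurable_snd (hg.comp measurable_fst))
  have hPhiF : ∀ z, PhiF a (x z) (y z) (g z)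
      = ∫ τ, {q : α × ℝ | q.2 ∈ Ioc 0 (g q.1)}.indicator
          (fun q => phiF a (x q.1) (y q.1) q.2) (z, τ) := by
    intro z
    rw [PhiF, intervalIntegral.integral_of_le (hg0 z), ← integral_indicator measurableSet_Ioc]
    rfl
  simp_rw [hPhiF]
  exact ((hphi.indicator hS).stronglyMeasurable.integral_prod_right').measurable

variable {Ω : Set (Eucl N)} {u : Eucl N → ℝ}

theorem modO_antitoneOn (hmono : ∀ x y, Monotone (phiF a x y)) :
    AntitoneOn (modO a Ω u) (Ioi 0) := by
  intro l₁ hl₁ l₂ hl₂ h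
  refine lintegral_mono fun x => ENNReal.ofReal_le_ofReal ?_
  exact monotoneOn_PhiF (hmono x x) (mem_Ici.2 (div_nonneg (abs_nonneg _) (le_of_lt hl₂)))
    (mem_Ici.2 (div_nonneg (abs_nonneg _) (le_of_lt hl₁)))
    (div_le_div_of_nonneg_left (abs_nonneg _) hl₁ h)

theorem modQ_antitoneOn {s : ℝ} (hmono : ∀ x y, Monotone (phiF a x y)) :
    AntitoneOn (modQ a s Ω u) (Ioi 0) := by
  intro l₁ hl₁ l₂ hl₂ h
  refine lintegral_mono fun p => ENNReal.ofReal_le_ofReal ?_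
  have hr : 0 ≤ |u p.1 - u p.2| / dist p.1 p.2 ^ s :=
    div_nonneg (abs_nonneg _) (Real.rpow_nonneg dist_nonneg s)
  simp only [div_mul_eq_div_div_swap]
  gcongr
  exact monotoneOn_PhiF (hmono p.1 p.2) (div_nonneg hr (le_of_lt hl₂))
    (div_nonneg hr (le_of_lt hl₁)) (div_le_div_of_nonneg_left hr hl₁ h)

theorem ae_restrict_eq_zero_of_lux_modO_eq_zero
    (ha : Measurable fun p : Eucl N × Eucl N × ℝ => a p.1 p.2.1 p.2.2)
    (hmono : ∀ x y, StrictMono (phiF a x y)) (hu : Measurable u) (h : lux (modO a Ω u) = 0) :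
    ∀ᵐ x ∂volume.restrict Ω, u x = 0 := by
  have hbound : ∀ lam, 0 < lam → modO a Ω u lam ≤ 1 :=
    fun _ => le_one_of_lux_eq_zero (modO_antitoneOn fun x y => (hmono x y).monotone) h
  have hmeas : ∀ lam, 0 < lam → Measurable fun x => ENNReal.ofReal (PhiF a x x (|u x| / lam)) :=
    fun lam hlam => ENNReal.measurable_ofReal.comp <| measurable_PhiF ha measurable_id
      measurable_id (hu.abs.div_const lam) fun x => div_nonneg (abs_nonneg _) hlam.le
  filter_upwards [ae_not_tendsto_top_of_lintegral_le hmeas ENNReal.one_ne_top hbound] with x hx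
  by_contra hux
  exact hx (ENNReal.tendsto_ofReal_atTop.comp
    (tendsto_PhiF_div_nhdsGT_zero (hmono x x) (abs_pos.2 hux)))

theorem ae_restrict_Qset_eq_of_lux_modQ_eq_zero {s : ℝ}
    (ha : Measurable fun p : Eucl N × Eucl N × ℝ => a p.1 p.2.1 p.2.2)
    (hmono : ∀ x y, StrictMono (phiF a x y)) (hu : Measurable u) (h : lux (modQ a s Ω u) = 0) :
    ∀ᵐ p ∂volume.restrict (Qset Ω), u p.1 = u p.2 := by
  have hbound : ∀ lam, 0 < lam → modQ a s Ω u lam ≤ 1 :=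
    fun _ => le_one_of_lux_eq_zero (modQ_antitoneOn fun x y => (hmono x y).monotone) h
  have hdist : ∀ t : ℝ, Measurable fun p : Eucl N × Eucl N => dist p.1 p.2 ^ t :=
    fun t => continuous_dist.measurable.pow_const t
  have hmeas : ∀ lam, 0 < lam → Measurable fun p : Eucl N × Eucl N => ENNReal.ofReal
      (PhiF a p.1 p.2 (|u p.1 - u p.2| / (lam * dist p.1 p.2 ^ s)) / dist p.1 p.2 ^ (N : ℝ)) :=
    fun lam hlam => ENNReal.measurable_ofReal.comp <| .div (measurable_PhiF ha measurable_fst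
      measurable_snd (((hu.comp measurable_fst).sub (hu.comp measurable_snd)).abs.div
        (measurable_const.mul (hdist s)))
      fun p => div_nonneg (abs_nonneg _) (mul_nonneg hlam.le (Real.rpow_nonneg dist_nonneg s)))
      (hdist N)
  filter_upwards [ae_not_tendsto_top_of_lintegral_le hmeas ENNReal.one_ne_top hbound] with p hp
  by_contra hne
  have hd : 0 < dist p.1 p.2 := dist_pos.2 fun hxy => hne (congrArg u hxy)
  have hr : 0 < |u p.1 - u p.2| / dist p.1 p.2 ^ s :=
    div_pos (abs_pos.2 (sub_ne_zero.2 hne)) (Real.rpow_pos_of_pos hd s)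
  simp only [div_mul_eq_div_div_swap] at hp
  exact hp (ENNReal.tendsto_ofReal_atTop.comp ((tendsto_PhiF_div_nhdsGT_zero (hmono p.1 p.2)
    hr).atTop_div_const (Real.rpow_pos_of_pos hd _)))

end Modular

theorem statement0_general (N : ℕ)
    (Ω : Set (Eucl N)) (hΩo : IsOpen Ω) (hΩne : Ω.Nonempty)
    (s : ℝ)
    (a : Eucl N → Eucl N → ℝ → ℝ)
    (ha : Measurable fun p : Eucl N × Eucl N × ℝ => a p.1 p.2.1 p.2.2)
    (hmono : ∀ x y, StrictMono (phiF a x y))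
    (β : Eucl N → ℝ)
    (u : Eucl N → ℝ) (hu : Measurable u)
    (h0 : normX a s Ω β u = 0) :
    ∀ᵐ x : Eucl N, u x = 0 := by
  obtain ⟨⟨hQ, hO⟩, -⟩ : (lux (modQ a s Ω u) = 0 ∧ lux (modO a Ω u) = 0) ∧
      lux (modB a Ω β u) = 0 := by
    simpa only [normX, add_eq_zero] using h0
  have hΩu := ae_restrict_eq_zero_of_lux_modO_eq_zero ha hmono hu hO
  have hΩcu : ∀ᵐ y ∂volume.restrict Ωᶜ, u y = 0 := by
    refine ae_eq_of_ae_prod_eq (by simpa using hΩo.measure_ne_zero volume hΩne) hΩu ?_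
    rw [Measure.prod_restrict, ← Measure.volume_eq_prod]
    exact ae_restrict_of_ae_restrict_of_subset (s := Ω ×ˢ Ωᶜ) (t := Qset Ω)
      (fun p hp hpc => hpc.1 hp.1)
      (ae_restrict_Qset_eq_of_lux_modQ_eq_zero ha hmono hu hQ)
  rw [← Measure.restrict_add_restrict_compl (μ := volume) hΩo.measurableSet]
  exact ae_add_measure_iff.2 ⟨hΩu, hΩcu⟩

/-- if `u` is measurable and `‖u‖_X = 0`, then `u = 0` a.e. in `ℝ^N`. -/
theorem statement0 (N : ℕ) (hN : 1 ≤ N)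
    (Ω : Set (Eucl N)) (hΩo : IsOpen Ω) (hΩb : Bornology.IsBounded Ω) (hΩne : Ω.Nonempty)
    (s : ℝ) (hs : s ∈ Set.Ioo (0:ℝ) 1)
    (a : Eucl N → Eucl N → ℝ → ℝ)
    (ha : Measurable fun p : Eucl N × Eucl N × ℝ => a p.1 p.2.1 p.2.2)
    (hmono : ∀ x y, StrictMono (phiF a x y))
    (hcont : ∀ x y, Continuous (phiF a x y))
    (hsurj : ∀ x y, Function.Surjective (phiF a x y))
    (β : Eucl N → ℝ) (hβm : Measurable β)
    (hβb : ∃ C : ℝ, ∀ᵐ x ∂(volume.restrict Ωᶜ), |β x| ≤ C)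
    (hβ0 : ∀ᵐ x ∂(volume.restrict Ωᶜ), 0 ≤ β x)
    (u : Eucl N → ℝ) (hu : Measurable u)
    (h0 : normX a s Ω β u = 0) :
    ∀ᵐ x : Eucl N, u x = 0 :=
  statement0_general N Ω hΩo hΩne s a ha hmono β u hu h0
end
end

section
/- Suppose a is symmetric (a(x,y,t) = a(y,x,t) for all x, y, t) and the function (x,y) ↦ a(x,y,|D^s u(x,y)|)·|D^s u(x,y)|·|x − y|^{−(N+s)} is integrable on Ω × ℝ^N. Then ∫_Ω (−Δ)^s_a u(x) dx = −∫_{CΩ} 𝒩^s_a u(x) dx. -/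
open MeasureTheory Set Filter
open scoped ENNReal

noncomputable section

variable {N : ℕ}

/-- `∫_Ω (−Δ)^s_a u dx = − ∫_{CΩ} 𝒩^s_a u dx`. -/
theorem statement6
    (N : ℕ) (hN : 1 ≤ N)
    (Ω : Set (Eucl N)) (hΩo : IsOpen Ω) (hΩb : Bornology.IsBounded Ω) (hΩne : Ω.Nonempty)
    (s : ℝ) (hs : s ∈ Set.Ioo (0:ℝ) 1)
    (a : Eucl N → Eucl N → ℝ → ℝ)
    (ha : Measurable fun p : Eucl N × Eucl N × ℝ => a p.1 p.2.1 p.2.2)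
    (u : Eucl N → ℝ) (hu : Measurable u)
    (hsym : ∀ x y t, a x y t = a y x t)
    (hint : IntegrableOn
      (fun p : Eucl N × Eucl N =>
        (if u p.1 = u p.2 then 0 else a p.1 p.2 |Du s u p| * |Du s u p|) /
          dist p.1 p.2 ^ ((N : ℝ) + s))
      (Ω ×ˢ (Set.univ : Set (Eucl N)))) :
    (∫ x in Ω, (∫ y, Ku a s u (x, y) / dist x y ^ ((N : ℝ) + s))) =
      - ∫ x in Ωᶜ, Nop a s Ω u x := by
  classical
  have hΩm : MeasurableSet Ω := hΩo.measurableSet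
  set F : Eucl N × Eucl N → ℝ :=
    fun p => Ku a s u p / dist p.1 p.2 ^ ((N : ℝ) + s) with hF
  -- measurability
  have hd : Measurable fun p : Eucl N × Eucl N => dist p.1 p.2 :=
    continuous_dist.measurable
  have hDu : Measurable (Du s u) := by
    unfold Du
    exact ((hu.comp measurable_fst).sub (hu.comp measurable_snd)).div
      ((continuous_dist.rpow_const (fun _ => Or.inr hs.1.le)).measurable)
  have hKu : Measurable (Ku a s u) := by
    unfold Ku
    have hset : MeasurableSet {p : Eucl N × Eucl N | u p.1 = u p.2} :=
      measurableSet_eq_fun (hu.comp measurable_fst) (hu.comp measurable_snd)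
    have haφ : Measurable fun p : Eucl N × Eucl N => a p.1 p.2 |Du s u p| :=
      ha.comp (measurable_fst.prodMk (measurable_snd.prodMk hDu.abs))
    exact Measurable.ite hset measurable_const (haφ.mul hDu)
  have hFm : Measurable F :=
    hKu.div ((continuous_dist.rpow_const (fun _ => Or.inr (by have := hs.1.le; positivity))).measurable)
  -- integrability on Ω × univ
  have hFint : Integrable F ((volume.restrict Ω).prod (volume : Measure (Eucl N))) := by
    have h1 : (volume.restrict Ω).prod (volume : Measure (Eucl N)) =
        (volume : Measure (Eucl N × Eucl N)).restrict (Ω ×ˢ Set.univ) := by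
      rw [Measure.volume_eq_prod, ← Measure.prod_restrict, Measure.restrict_univ]
    rw [h1]
    refine Integrable.mono hint hFm.aestronglyMeasurable.restrict (Filter.Eventually.of_forall ?_)
    intro p
    have habs : |Ku a s u p| =
        abs (if u p.1 = u p.2 then 0 else a p.1 p.2 |Du s u p| * |Du s u p|) := by
      unfold Ku; split_ifs <;> simp [abs_mul, abs_abs]
    simp only [hF, Real.norm_eq_abs, abs_div, habs, le_refl]
  -- antisymmetry
  have hKanti : ∀ x y : Eucl N, Ku a s u (y, x) = - Ku a s u (x, y) := by
    intro x y
    have hDanti : Du s u (y, x) = - Du s u (x, y) := by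
      simp only [Du]
      rw [dist_comm y x, ← neg_div, neg_sub]
    simp only [Ku, hDanti]
    by_cases h : u x = u y
    · rw [if_pos h.symm, if_pos h, neg_zero]
    · rw [if_neg (fun hh => h hh.symm), if_neg h, abs_neg, hsym y x, mul_neg]
  have hanti : ∀ p : Eucl N × Eucl N, F p.swap = - F p := by
    rintro ⟨x, y⟩
    simp only [hF, Prod.swap_prod_mk]
    rw [hKanti, dist_comm y x, neg_div]
  -- split the product measure
  have hsplit : (volume : Measure (Eucl N)) = volume.restrict Ω + volume.restrict Ωᶜ :=
    (Measure.restrict_add_restrict_compl hΩm).symm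
  have hprodsplit : (volume.restrict Ω).prod (volume : Measure (Eucl N)) =
      (volume.restrict Ω).prod (volume.restrict Ω) +
        (volume.restrict Ω).prod (volume.restrict Ωᶜ) := by
    rw [← Measure.prod_add, ← hsplit]
  have hFint' := hFint
  rw [hprodsplit] at hFint'
  obtain ⟨hint1, hint2⟩ := (integrable_add_measure).mp hFint'
  -- the Ω × Ω part vanishes
  have hzero : ∫ z, F z ∂((volume.restrict Ω).prod (volume.restrict Ω)) = 0 := by
    have h1 : ∫ z, F z ∂((volume.restrict Ω).prod (volume.restrict Ω)) =
        ∫ z, F z.swap ∂((volume.restrict Ω).prod (volume.restrict Ω)) :=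
      (MeasureTheory.integral_prod_swap F).symm
    have h2 : ∫ z, F z.swap ∂((volume.restrict Ω).prod (volume.restrict Ω)) =
        - ∫ z, F z ∂((volume.restrict Ω).prod (volume.restrict Ω)) := by
      simp_rw [hanti]; exact integral_neg F
    linarith [h1.trans h2]
  -- swap on Ω × Ωᶜ
  have hint2' : Integrable F ((volume.restrict Ωᶜ).prod (volume.restrict Ω)) := by
    have := (hint2.swap).neg
    refine this.congr (Filter.Eventually.of_forall fun z => ?_)
    simp only [Function.comp, Pi.neg_apply]
    rw [hanti z]; ring
  have hswap2 : ∫ z, F z ∂((volume.restrict Ω).prod (volume.restrict Ωᶜ)) =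
      - ∫ z, F z ∂((volume.restrict Ωᶜ).prod (volume.restrict Ω)) := by
    rw [← MeasureTheory.integral_prod_swap F]
    simp_rw [hanti]
    exact integral_neg F
  -- assemble
  have hLHS : (∫ x in Ω, (∫ y, Ku a s u (x, y) / dist x y ^ ((N : ℝ) + s))) =
      ∫ z, F z ∂((volume.restrict Ω).prod (volume : Measure (Eucl N))) :=
    (MeasureTheory.integral_prod F hFint).symm
  have hRHS : (∫ x in Ωᶜ, Nop a s Ω u x) =
      ∫ z, F z ∂((volume.restrict Ωᶜ).prod (volume.restrict Ω)) := by
    unfold Nop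
    exact (MeasureTheory.integral_prod F hint2').symm
  rw [hLHS, hRHS, hprodsplit, integral_add_measure hint1 hint2, hzero, hswap2]
  ring
end
end

section
/- Suppose a is symmetric (a(x,y,t) = a(y,x,t) for all x, y, t) and the function (x,y) ↦ a(x,y,|D^s u(x,y)|)·|D^s u(x,y)|·(|v(x)| + |v(y)|)·|x − y|^{−(N+s)} is integrable on Q. Then (1/2)·∬_Q a(x,y,|D^s u(x,y)|)·D^s u(x,y)·D^s v(x,y)·dx dy/|x − y|^N = ∫_Ω v(x)·(−Δ)^s_a u(x) dx + ∫_{CΩ} v(x)·𝒩^s_a u(x) dx. -/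
open MeasureTheory Set Filter
open scoped ENNReal

noncomputable section

variable {N : ℕ}

lemma measurable_Du {s : ℝ} (hs : 0 ≤ s) {u : Eucl N → ℝ} (hu : Measurable u) :
    Measurable (Du s u) := by
  apply Measurable.div
  · exact (hu.comp measurable_fst).sub (hu.comp measurable_snd)
  · exact (Real.continuous_rpow_const hs).measurable.comp measurable_dist

lemma measurable_Ku {a : Eucl N → Eucl N → ℝ → ℝ}
    (ha : Measurable fun p : Eucl N × Eucl N × ℝ => a p.1 p.2.1 p.2.2)
    {s : ℝ} (hs : 0 ≤ s) {u : Eucl N → ℝ} (hu : Measurable u) :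
    Measurable (Ku a s u) := by
  have hDu : Measurable (Du s u) := measurable_Du hs hu
  have hset : MeasurableSet {p : Eucl N × Eucl N | u p.1 = u p.2} :=
    measurableSet_eq_fun (hu.comp measurable_fst) (hu.comp measurable_snd)
  have hA : Measurable fun p : Eucl N × Eucl N => a p.1 p.2 |Du s u p| :=
    ha.comp (measurable_fst.prodMk (measurable_snd.prodMk hDu.abs))
  exact Measurable.ite hset measurable_const (hA.mul hDu)

lemma Ku_swap {a : Eucl N → Eucl N → ℝ → ℝ} (hsym : ∀ x y t, a x y t = a y x t)
    (s : ℝ) (u : Eucl N → ℝ) (x y : Eucl N) :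
    Ku a s u (y, x) = - Ku a s u (x, y) := by
  simp only [Ku, Du]
  by_cases h : u x = u y
  · simp [h]
  · have h' : ¬ u y = u x := fun e => h e.symm
    rw [if_neg h, if_neg h']
    have hd : dist y x = dist x y := dist_comm y x
    have hq : (u y - u x) / dist y x ^ s = -((u x - u y) / dist x y ^ s) := by
      rw [hd]; ring
    simp only [hq, abs_neg]
    rw [hsym y x]
    ring

/-- the nonlocal integration by parts formula
`(1/2)∬_Q a(x,y,|D^s u|) D^s u D^s v dxdy/|x−y|^N = ∫_Ω v (−Δ)^s_a u + ∫_{CΩ} v 𝒩^s_a u`. -/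
theorem statement7
    (N : ℕ) (hN : 1 ≤ N)
    (Ω : Set (Eucl N)) (hΩo : IsOpen Ω) (hΩb : Bornology.IsBounded Ω) (hΩne : Ω.Nonempty)
    (s : ℝ) (hs : s ∈ Set.Ioo (0:ℝ) 1)
    (a : Eucl N → Eucl N → ℝ → ℝ)
    (ha : Measurable fun p : Eucl N × Eucl N × ℝ => a p.1 p.2.1 p.2.2)
    (u v : Eucl N → ℝ) (hu : Measurable u) (hv : Measurable v)
    (hsym : ∀ x y t, a x y t = a y x t)
    (hint : IntegrableOn
      (fun p : Eucl N × Eucl N =>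
        (if u p.1 = u p.2 then 0 else a p.1 p.2 |Du s u p| * |Du s u p|) *
          (|v p.1| + |v p.2|) / dist p.1 p.2 ^ ((N : ℝ) + s))
      (Qset Ω)) :
    (1/2) * (∫ p in Qset Ω, Ku a s u p * Du s v p / dist p.1 p.2 ^ (N : ℝ)) =
      (∫ x in Ω, v x * (∫ y, Ku a s u (x, y) / dist x y ^ ((N : ℝ) + s))) +
        ∫ x in Ωᶜ, v x * Nop a s Ω u x := by
  have hs0 : 0 ≤ s := le_of_lt hs.1
  have hNs : 0 ≤ (N : ℝ) + s := by positivity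
  -- the key kernel function
  have hs0 : 0 ≤ s := le_of_lt hs.1
  have hNs : 0 ≤ (N : ℝ) + s := by positivity
  set F : Eucl N × Eucl N → ℝ :=
    fun p => v p.1 * (Ku a s u p / dist p.1 p.2 ^ ((N : ℝ) + s)) with hF
  have hKum : Measurable (Ku a s u) := measurable_Ku ha hs0 hu
  have hFm : Measurable F := by
    apply (hv.comp measurable_fst).mul
    exact hKum.div ((Real.continuous_rpow_const hNs).measurable.comp measurable_dist)
  have hKu_diag : ∀ p : Eucl N × Eucl N, p.1 = p.2 → Ku a s u p = 0 := by
    intro p h; simp [Ku, h]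
  set B : Eucl N × Eucl N → ℝ :=
    fun p => (if u p.1 = u p.2 then 0 else a p.1 p.2 |Du s u p| * |Du s u p|) *
        (|v p.1| + |v p.2|) / dist p.1 p.2 ^ ((N : ℝ) + s) with hB
  have habs : ∀ p : Eucl N × Eucl N, |Ku a s u p| =
      |(if u p.1 = u p.2 then 0 else a p.1 p.2 |Du s u p| * |Du s u p|)| := by
    intro p
    by_cases h : u p.1 = u p.2
    · simp [Ku, h]
    · simp only [Ku, if_neg h, abs_mul, abs_abs]
  have hbound : ∀ p : Eucl N × Eucl N, ‖F p‖ ≤ ‖B p‖ := by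
    intro p
    have hd0 : (0:ℝ) ≤ dist p.1 p.2 ^ ((N : ℝ) + s) := Real.rpow_nonneg dist_nonneg _
    have hv0 : (0:ℝ) ≤ |v p.1| + |v p.2| := by positivity
    simp only [hF, hB, Real.norm_eq_abs, abs_mul, abs_div, abs_of_nonneg hd0, habs p,
      abs_of_nonneg hv0]
    rw [div_eq_mul_inv, mul_div_assoc, div_eq_mul_inv, ← mul_assoc, ← mul_assoc]
    apply mul_le_mul_of_nonneg_right _ (inv_nonneg.mpr hd0)
    rw [mul_comm]
    exact mul_le_mul_of_nonneg_left (le_add_of_nonneg_right (abs_nonneg _)) (abs_nonneg _)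
  have hFint : IntegrableOn F (Qset Ω) := by
    exact Integrable.mono hint hFm.aestronglyMeasurable.restrict (ae_of_all _ hbound)
  -- symmetry of Q under swap
  have hQswap : Prod.swap ⁻¹' Qset Ω = Qset Ω := by
    ext p; simp only [Qset, Set.mem_preimage, Set.mem_compl_iff, Set.mem_prod, Prod.fst_swap,
      Prod.snd_swap]; tauto
  have hmp : MeasurePreserving (Prod.swap : Eucl N × Eucl N → Eucl N × Eucl N) volume volume := by
    rw [Measure.volume_eq_prod]
    exact Measure.measurePreserving_swap
  have hemb : MeasurableEmbedding (Prod.swap : Eucl N × Eucl N → Eucl N × Eucl N) :=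
    MeasurableEquiv.prodComm.measurableEmbedding
  have hswap_eq : ∫ p in Qset Ω, F (Prod.swap p) = ∫ p in Qset Ω, F p := by
    conv_lhs => rw [← hQswap]
    exact hmp.setIntegral_preimage_emb hemb F (Qset Ω)
  have hswap_int : IntegrableOn (fun p => F (Prod.swap p)) (Qset Ω) := by
    have := (hmp.integrableOn_comp_preimage hemb (f := F) (s := Qset Ω)).mpr hFint
    rwa [hQswap] at this
  -- pointwise splitting
  have hsplit : ∀ p : Eucl N × Eucl N,
      Ku a s u p * Du s v p / dist p.1 p.2 ^ (N : ℝ) = F p + F (Prod.swap p) := by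
    rintro ⟨x, y⟩
    by_cases hxy : x = y
    · subst hxy
      simp [hF, hKu_diag (x, x) rfl]
    · have hd : (0:ℝ) < dist x y := dist_pos.mpr hxy
      have hKs : Ku a s u (y, x) = - Ku a s u (x, y) := Ku_swap hsym s u x y
      have hdc : dist y x = dist x y := dist_comm y x
      have hadd : dist x y ^ ((N : ℝ) + s) = dist x y ^ (N : ℝ) * dist x y ^ s :=
        Real.rpow_add hd _ _
      have hN0 : dist x y ^ (N : ℝ) ≠ 0 := by positivity
      have hs0' : dist x y ^ s ≠ 0 := by positivity
      simp only [hF, Prod.swap_prod_mk, hKs, hdc, hadd, Du]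
      field_simp
      ring
  -- split Q into (Ω × univ) ∪ (Ωᶜ × Ω)
  have hQ : Qset Ω = (Ω ×ˢ (Set.univ : Set (Eucl N))) ∪ (Ωᶜ ×ˢ Ω) := by
    ext ⟨x, y⟩
    simp only [Qset, Set.mem_compl_iff, Set.mem_prod, Set.mem_union, Set.mem_univ, and_true]
    tauto
  have hdisj : Disjoint (Ω ×ˢ (Set.univ : Set (Eucl N))) (Ωᶜ ×ˢ Ω) := by
    rw [Set.disjoint_left]
    rintro ⟨x, y⟩ h1 h2
    exact h2.1 h1.1
  have hmeas2 : MeasurableSet (Ωᶜ ×ˢ Ω) :=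
    (hΩo.measurableSet.compl).prod hΩo.measurableSet
  have hint1 : IntegrableOn F (Ω ×ˢ (Set.univ : Set (Eucl N))) := by
    apply hFint.mono_set; rw [hQ]; exact Set.subset_union_left
  have hint2 : IntegrableOn F (Ωᶜ ×ˢ Ω) := by
    apply hFint.mono_set; rw [hQ]; exact Set.subset_union_right
  have hQint : ∫ p in Qset Ω, F p =
      (∫ p in Ω ×ˢ (Set.univ : Set (Eucl N)), F p) + ∫ p in Ωᶜ ×ˢ Ω, F p := by
    rw [hQ]; exact setIntegral_union hdisj hmeas2 hint1 hint2
  have hfub1 : ∫ p in Ω ×ˢ (Set.univ : Set (Eucl N)), F p =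
      ∫ x in Ω, v x * ∫ y, Ku a s u (x, y) / dist x y ^ ((N : ℝ) + s) := by
    rw [Measure.volume_eq_prod] at hint1 ⊢
    rw [setIntegral_prod F hint1]
    refine setIntegral_congr_fun hΩo.measurableSet fun x _ => ?_
    rw [Measure.restrict_univ]
    exact integral_const_mul (v x) _
  have hfub2 : ∫ p in Ωᶜ ×ˢ Ω, F p = ∫ x in Ωᶜ, v x * Nop a s Ω u x := by
    rw [Measure.volume_eq_prod] at hint2 ⊢
    rw [setIntegral_prod F hint2]
    refine setIntegral_congr_fun hΩo.measurableSet.compl fun x _ => ?_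
    exact integral_const_mul (v x) _
  have hmain : ∫ p in Qset Ω, Ku a s u p * Du s v p / dist p.1 p.2 ^ (N : ℝ) =
      2 * ∫ p in Qset Ω, F p := by
    calc ∫ p in Qset Ω, Ku a s u p * Du s v p / dist p.1 p.2 ^ (N : ℝ)
        = ∫ p in Qset Ω, (F p + F (Prod.swap p)) := by
          have he : (fun p : Eucl N × Eucl N =>
              Ku a s u p * Du s v p / dist p.1 p.2 ^ (N : ℝ)) =
              fun p => F p + F (Prod.swap p) := funext hsplit
          rw [he]
      _ = (∫ p in Qset Ω, F p) + ∫ p in Qset Ω, F (Prod.swap p) :=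
          integral_add hFint hswap_int
      _ = 2 * ∫ p in Qset Ω, F p := by rw [hswap_eq]; ring
  rw [hmain, ← hfub1, ← hfub2, ← hQint]
  ring
end
end

section
/- Assume (Φ1), assume |F(x,t)| ≤ c₁|t|^{q(x)} for all x ∈ Ω and t ∈ ℝ with a constant c₁ > 0, assume q⁺ < φ⁻, and assume there is c > 0 such that ‖u‖_{q(·)} ≤ c·‖u‖ for all u ∈ X. Then for every λ > 0 the functional J_λ is coercive on X: for every M ∈ ℝ there exists R > 0 such that every u ∈ X with ‖u‖ ≥ R satisfies J_λ(u) ≥ M. -/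
open MeasureTheory Set Filter
open scoped ENNReal

noncomputable section

variable {N : ℕ}

/-!
Write `T = ‖u‖ ≥ 2`. Since `T/2 < T`, the modular of `u/(T/2)` exceeds `1`, and the lower growth
bound `Φ(μt) ≥ μ^{φ⁻} Φ(t)` for `μ ≥ 1` (obtained by integrating `t φ(t) ≥ φ⁻ Φ(t)`) turns this
into `ρ_s(u) ≥ (T/2)^{φ⁻}`. The embedding gives `‖u‖_{q(·)} < (c+1)T`, hence
`∫_Ω |u|^{q(x)} ≤ ((c+1)T)^{q⁺}` and `λ ∫_Ω F(x,u) ≤ λ c₁ ((c+1)T)^{q⁺}`. So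
`J_λ(u) ≥ ½ (T/2)^{φ⁻} - λ c₁ ((c+1)T)^{q⁺}`, which tends to infinity with `T` as `q⁺ < φ⁻`.

The upper growth bound `t φ(t) ≤ φ⁺ Φ(t)` keeps `ρ_s(u)` finite, so the `toReal` in `Jlam` does
not read `∞` as `0`.
-/

section RpowScaling

variable {g g' : ℝ → ℝ} {p μ : ℝ}

theorem monotoneOn_mul_rpow_neg_of_le_mul_deriv (hg : ∀ m > 0, HasDerivAt g (g' m) m)
    (h : ∀ m > 0, p * g m ≤ m * g' m) :
    MonotoneOn (fun m => g m * m ^ (-p)) (Ioi 0) := by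
  have hderiv : ∀ m > 0, HasDerivAt (fun m => g m * m ^ (-p))
      (g' m * m ^ (-p) + g m * (-p * m ^ (-p - 1))) m := fun m hm =>
    (hg m hm).mul (Real.hasDerivAt_rpow_const (Or.inl hm.ne'))
  refine monotoneOn_of_deriv_nonneg (convex_Ioi 0)
    (fun m hm => (hderiv m hm).continuousAt.continuousWithinAt)
    (fun m hm => (hderiv m (interior_subset hm)).differentiableAt.differentiableWithinAt) ?_
  intro m hm
  rw [interior_Ioi] at hm
  have hm : 0 < m := hm
  rw [(hderiv m hm).deriv, Real.rpow_sub_one hm.ne']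
  have hfactor : g' m * m ^ (-p) + g m * (-p * (m ^ (-p) / m))
      = m ^ (-p) / m * (m * g' m - p * g m) := by
    field_simp
    ring
  rw [hfactor]
  exact mul_nonneg (by positivity) (by linarith [h m hm])

theorem rpow_mul_le_of_le_mul_rpow_neg {a b : ℝ} (hμ : 0 < μ) (h : a ≤ b * μ ^ (-p)) :
    μ ^ p * a ≤ b := by
  rw [Real.rpow_neg hμ.le, ← div_eq_mul_inv, le_div_iff₀ (by positivity)] at h
  linarith

theorem rpow_mul_le_of_le_mul_deriv (hg : ∀ m > 0, HasDerivAt g (g' m) m)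
    (h : ∀ m > 0, p * g m ≤ m * g' m) (hμ : 1 ≤ μ) : μ ^ p * g 1 ≤ g μ := by
  have hμ0 : 0 < μ := one_pos.trans_le hμ
  have hmono := monotoneOn_mul_rpow_neg_of_le_mul_deriv hg h (mem_Ioi.2 one_pos)
    (mem_Ioi.2 hμ0) hμ
  simp only [Real.one_rpow, mul_one] at hmono
  exact rpow_mul_le_of_le_mul_rpow_neg hμ0 hmono

theorem rpow_mul_le_of_mul_deriv_le (hg : ∀ m > 0, HasDerivAt g (g' m) m)
    (h : ∀ m > 0, m * g' m ≤ p * g m) (hμ0 : 0 < μ) (hμ : μ ≤ 1) : μ ^ p * g 1 ≤ g μ := by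
  have hmono := monotoneOn_mul_rpow_neg_of_le_mul_deriv (g := -g) (g' := -g') (p := p)
    (fun m hm => (hg m hm).neg) (fun m hm => by simp only [Pi.neg_apply]; linarith [h m hm])
    (mem_Ioi.2 hμ0) (mem_Ioi.2 one_pos) hμ
  simp only [Pi.neg_apply, Real.one_rpow, mul_one, neg_mul, neg_le_neg_iff] at hmono
  exact rpow_mul_le_of_le_mul_rpow_neg hμ0 hmono

end RpowScaling

section PhiF

variable {a : Eucl N → Eucl N → ℝ → ℝ} {x y : Eucl N} {φm φp : ℝ}

theorem phiF_pos (hmono : StrictMono (phiF a x y)) {t : ℝ} (ht : 0 < t) : 0 < phiF a x y t := by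
  have h0 : phiF a x y 0 = 0 := if_pos rfl
  simpa [h0] using hmono ht

theorem PhiF_pos (hmono : StrictMono (phiF a x y)) (hcont : Continuous (phiF a x y))
    {t : ℝ} (ht : 0 < t) : 0 < PhiF a x y t :=
  intervalIntegral.intervalIntegral_pos_of_pos_on (hcont.intervalIntegrable 0 t)
    (fun _ hτ => phiF_pos hmono hτ.1) ht

theorem PhiF_hasDerivAt (hcont : Continuous (phiF a x y)) (t : ℝ) :
    HasDerivAt (PhiF a x y) (phiF a x y t) t :=
  (hcont.integral_hasStrictDerivAt 0 t).hasDerivAt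

theorem PhiF_hasDerivAt_mul_const (hcont : Continuous (phiF a x y)) (r m : ℝ) :
    HasDerivAt (fun m => PhiF a x y (m * r)) (phiF a x y (m * r) * r) m :=
  (PhiF_hasDerivAt hcont (m * r)).comp (h := fun m => m * r) m (hasDerivAt_mul_const r)

theorem PhiF_growth (hmono : StrictMono (phiF a x y)) (hcont : Continuous (phiF a x y))
    (hΦ1 : ∀ t, 0 < t →
      φm ≤ t * phiF a x y t / PhiF a x y t ∧ t * phiF a x y t / PhiF a x y t ≤ φp)
    {r : ℝ} (hr : 0 ≤ r) :
    φm * PhiF a x y r ≤ r * phiF a x y r ∧ r * phiF a x y r ≤ φp * PhiF a x y r := by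
  rcases hr.eq_or_lt with rfl | hr
  · simp [PhiF]
  · have hP := PhiF_pos hmono hcont hr
    exact ⟨(le_div_iff₀ hP).1 (hΦ1 r hr).1, (div_le_iff₀ hP).1 (hΦ1 r hr).2⟩

theorem rpow_mul_PhiF_le_of_one_le (hmono : StrictMono (phiF a x y))
    (hcont : Continuous (phiF a x y))
    (hΦ1 : ∀ t, 0 < t →
      φm ≤ t * phiF a x y t / PhiF a x y t ∧ t * phiF a x y t / PhiF a x y t ≤ φp)
    {r μ : ℝ} (hr : 0 ≤ r) (hμ : 1 ≤ μ) :
    μ ^ φm * PhiF a x y r ≤ PhiF a x y (μ * r) := by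
  simpa using rpow_mul_le_of_le_mul_deriv (fun m _ => PhiF_hasDerivAt_mul_const hcont r m)
    (fun m hm => by linarith [(PhiF_growth hmono hcont hΦ1 (mul_nonneg hm.le hr)).1]) hμ

theorem rpow_mul_PhiF_le_of_le_one (hmono : StrictMono (phiF a x y))
    (hcont : Continuous (phiF a x y))
    (hΦ1 : ∀ t, 0 < t →
      φm ≤ t * phiF a x y t / PhiF a x y t ∧ t * phiF a x y t / PhiF a x y t ≤ φp)
    {r μ : ℝ} (hr : 0 ≤ r) (hμ0 : 0 < μ) (hμ : μ ≤ 1) :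
    μ ^ φp * PhiF a x y r ≤ PhiF a x y (μ * r) := by
  simpa using rpow_mul_le_of_mul_deriv_le (fun m _ => PhiF_hasDerivAt_mul_const hcont r m)
    (fun m hm => by linarith [(PhiF_growth hmono hcont hΦ1 (mul_nonneg hm.le hr)).2]) hμ0 hμ

theorem exists_pos_mul_PhiF_le_PhiF_mul (hmono : ∀ x y, StrictMono (phiF a x y))
    (hcont : ∀ x y, Continuous (phiF a x y))
    (hΦ1 : ∀ x y t, 0 < t →
      φm ≤ t * phiF a x y t / PhiF a x y t ∧ t * phiF a x y t / PhiF a x y t ≤ φp)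
    {μ : ℝ} (hμ : 0 < μ) :
    ∃ C > 0, ∀ x y r, 0 ≤ r → C * PhiF a x y r ≤ PhiF a x y (μ * r) := by
  rcases le_total 1 μ with h | h
  · exact ⟨μ ^ φm, by positivity, fun x y r hr =>
      rpow_mul_PhiF_le_of_one_le (hmono x y) (hcont x y) (hΦ1 x y) hr h⟩
  · exact ⟨μ ^ φp, by positivity, fun x y r hr =>
      rpow_mul_PhiF_le_of_le_one (hmono x y) (hcont x y) (hΦ1 x y) hr hμ h⟩

end PhiF

section Modular

variable {a : Eucl N → Eucl N → ℝ → ℝ} {s : ℝ} {Ω : Set (Eucl N)} {β : Eucl N → ℝ}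
  {φm φp : ℝ}

theorem ofReal_mul_rhoS_le_rhoS_const_mul (hβ0 : ∀ᵐ x ∂(volume.restrict Ωᶜ), 0 ≤ β x)
    {C μ : ℝ} (hC : 0 ≤ C) (hμ : 0 ≤ μ)
    (hscale : ∀ x y r, 0 ≤ r → C * PhiF a x y r ≤ PhiF a x y (μ * r)) (v : Eucl N → ℝ) :
    ENNReal.ofReal C * rhoS a s Ω β v ≤ rhoS a s Ω β (fun z => μ * v z) := by
  have habs : ∀ t, |μ * t| = μ * |t| := fun t => by rw [abs_mul, abs_of_nonneg hμ]
  simp only [rhoS, modQ, modO, modB, mul_add, ← lintegral_const_mul' _ _ ENNReal.ofReal_ne_top]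
  refine add_le_add (add_le_add (lintegral_mono fun p => ?_) (lintegral_mono fun z => ?_))
    (lintegral_mono_ae ?_)
  · rw [← ENNReal.ofReal_mul hC, ← mul_sub, habs, mul_div_assoc μ, ← mul_div_assoc C]
    gcongr
    exact hscale _ _ _ (by positivity)
  · rw [← ENNReal.ofReal_mul hC, habs, mul_div_assoc]
    gcongr
    exact hscale _ _ _ (by positivity)
  · filter_upwards [hβ0] with z hz
    rw [← ENNReal.ofReal_mul hC, habs, mul_div_assoc, mul_left_comm]
    gcongr
    exact hscale _ _ _ (by positivity)

theorem rhoS_ne_top_of_normM_lt_top (hmono : ∀ x y, StrictMono (phiF a x y))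
    (hcont : ∀ x y, Continuous (phiF a x y))
    (hΦ1 : ∀ x y t, 0 < t →
      φm ≤ t * phiF a x y t / PhiF a x y t ∧ t * phiF a x y t / PhiF a x y t ≤ φp)
    (hβ0 : ∀ᵐ x ∂(volume.restrict Ωᶜ), 0 ≤ β x) {u : Eucl N → ℝ}
    (hu : normM a s Ω β u < ⊤) : rhoS a s Ω β u ≠ ⊤ := by
  rw [normM, sInf_lt_iff] at hu
  obtain ⟨_, ⟨l, hl, rfl, hρ⟩, -⟩ := hu
  obtain ⟨C, hC, hscale⟩ := exists_pos_mul_PhiF_le_PhiF_mul hmono hcont hΦ1 (inv_pos.2 hl)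
  have h := ofReal_mul_rhoS_le_rhoS_const_mul (s := s) hβ0 hC.le (inv_pos.2 hl).le hscale u
  simp only [inv_mul_eq_div] at h
  intro htop
  rw [htop, ENNReal.mul_top (ENNReal.ofReal_pos.2 hC).ne'] at h
  exact ENNReal.top_ne_one (le_antisymm (h.trans hρ) le_top)

theorem ofReal_rpow_le_rhoS_of_ofReal_lt_normM (hmono : ∀ x y, StrictMono (phiF a x y))
    (hcont : ∀ x y, Continuous (phiF a x y))
    (hΦ1 : ∀ x y t, 0 < t →
      φm ≤ t * phiF a x y t / PhiF a x y t ∧ t * phiF a x y t / PhiF a x y t ≤ φp)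
    (hβ0 : ∀ᵐ x ∂(volume.restrict Ωᶜ), 0 ≤ β x) {u : Eucl N → ℝ} {μ : ℝ} (hμ : 1 ≤ μ)
    (hlt : ENNReal.ofReal μ < normM a s Ω β u) :
    ENNReal.ofReal (μ ^ φm) ≤ rhoS a s Ω β u := by
  have hμ0 : 0 < μ := one_pos.trans_le hμ
  have hgt : 1 < rhoS a s Ω β (fun z => u z / μ) :=
    lt_of_not_ge fun hle => hlt.not_ge (sInf_le ⟨μ, hμ0, rfl, hle⟩)
  have h := ofReal_mul_rhoS_le_rhoS_const_mul (s := s) hβ0 (by positivity) hμ0.le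
    (fun x y r hr => rpow_mul_PhiF_le_of_one_le (hmono x y) (hcont x y) (hΦ1 x y) hr hμ)
    (fun z => u z / μ)
  simp only [mul_div_cancel₀ _ hμ0.ne'] at h
  calc ENNReal.ofReal (μ ^ φm) = ENNReal.ofReal (μ ^ φm) * 1 := (mul_one _).symm
    _ ≤ ENNReal.ofReal (μ ^ φm) * rhoS a s Ω β (fun z => u z / μ) := by gcongr
    _ ≤ rhoS a s Ω β u := h

theorem half_toReal_rhoS_sub_le_Jlam {f : Eucl N → ℝ → ℝ} {lam : ℝ} {u : Eucl N → ℝ}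
    (hρ : rhoS a s Ω β u ≠ ⊤) :
    1 / 2 * (rhoS a s Ω β u).toReal - lam * ∫ x in Ω, Ff f x (u x) ≤ Jlam a s Ω β f lam u := by
  obtain ⟨⟨hQ, hO⟩, hB⟩ : (modQ a s Ω u 1 ≠ ⊤ ∧ modO a Ω u 1 ≠ ⊤) ∧ modB a Ω β u 1 ≠ ⊤ := by
    simpa only [rhoS, ENNReal.add_ne_top] using hρ
  rw [Jlam, rhoS, ENNReal.toReal_add (ENNReal.add_ne_top.2 ⟨hQ, hO⟩) hB,
    ENNReal.toReal_add hQ hO]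
  linarith [(modO a Ω u 1).toReal_nonneg, (modB a Ω β u 1).toReal_nonneg]

end Modular

section VariableExponent

variable {Ω : Set (Eucl N)} {q u : Eucl N → ℝ} {qp : ℝ}

theorem exists_lintegral_div_rpow_le_one_of_normq_lt {K : ℝ}
    (h : normq Ω q u < ENNReal.ofReal K) :
    ∃ l, 0 < l ∧ l < K ∧ ∫⁻ x in Ω, ENNReal.ofReal (|u x / l| ^ q x) ≤ 1 := by
  rw [normq, sInf_lt_iff] at h
  obtain ⟨_, ⟨l, hl, rfl, hint⟩, hlK⟩ := h
  exact ⟨l, hl, (ENNReal.ofReal_lt_ofReal_iff'.1 hlK).1, hint⟩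

theorem lintegral_rpow_le_of_lintegral_div_rpow_le_one (hΩ : MeasurableSet Ω)
    (hq0 : ∀ x ∈ Ω, 0 ≤ q x) (hqp : ∀ x ∈ Ω, q x ≤ qp) {l K : ℝ} (hl : 0 < l) (hlK : l ≤ K)
    (hK : 1 ≤ K) (h : ∫⁻ x in Ω, ENNReal.ofReal (|u x / l| ^ q x) ≤ 1) :
    ∫⁻ x in Ω, ENNReal.ofReal (|u x| ^ q x) ≤ ENNReal.ofReal (K ^ qp) := by
  have hpoint : ∀ x ∈ Ω, |u x| ^ q x ≤ K ^ qp * |u x / l| ^ q x := fun x hx => by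
    have hsplit : |u x| = l * |u x / l| := by
      rw [abs_div, abs_of_pos hl, mul_div_cancel₀ _ hl.ne']
    rw [hsplit, Real.mul_rpow hl.le (abs_nonneg _)]
    gcongr
    calc l ^ q x ≤ K ^ q x := Real.rpow_le_rpow hl.le hlK (hq0 x hx)
      _ ≤ K ^ qp := Real.rpow_le_rpow_of_exponent_le hK (hqp x hx)
  calc ∫⁻ x in Ω, ENNReal.ofReal (|u x| ^ q x)
      ≤ ∫⁻ x in Ω, ENNReal.ofReal (K ^ qp) * ENNReal.ofReal (|u x / l| ^ q x) :=
        setLIntegral_mono' hΩ fun x hx => by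
          rw [← ENNReal.ofReal_mul (by positivity)]
          exact ENNReal.ofReal_le_ofReal (hpoint x hx)
    _ = ENNReal.ofReal (K ^ qp) * ∫⁻ x in Ω, ENNReal.ofReal (|u x / l| ^ q x) :=
        lintegral_const_mul' _ _ ENNReal.ofReal_ne_top
    _ ≤ ENNReal.ofReal (K ^ qp) := mul_le_of_le_one_right' h

theorem integral_Ff_le (hΩ : MeasurableSet Ω) (hu : Measurable u)
    (hq : AEMeasurable q (volume.restrict Ω)) {f : Eucl N → ℝ → ℝ} {c₁ A : ℝ} (hc₁ : 0 ≤ c₁)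
    (hF : ∀ x ∈ Ω, ∀ t : ℝ, |Ff f x t| ≤ c₁ * |t| ^ q x) (hA : 0 ≤ A)
    (h : ∫⁻ x in Ω, ENNReal.ofReal (|u x| ^ q x) ≤ ENNReal.ofReal A) :
    ∫ x in Ω, Ff f x (u x) ≤ c₁ * A := by
  have hmeas : AEStronglyMeasurable (fun x => |u x| ^ q x) (volume.restrict Ω) :=
    (hu.abs.aemeasurable.pow hq).aestronglyMeasurable
  have hnonneg : 0 ≤ᵐ[volume.restrict Ω] fun x => |u x| ^ q x :=
    ae_of_all _ fun x => by positivity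
  have hint : Integrable (fun x => |u x| ^ q x) (volume.restrict Ω) :=
    (lintegral_ofReal_ne_top_iff_integrable hmeas hnonneg).1
      (ne_top_of_le_ne_top ENNReal.ofReal_ne_top h)
  calc ∫ x in Ω, Ff f x (u x) ≤ ‖∫ x in Ω, Ff f x (u x)‖ := le_abs_self _
    _ ≤ ∫ x in Ω, c₁ * |u x| ^ q x :=
        norm_integral_le_of_norm_le (hint.const_mul c₁)
          ((ae_restrict_mem hΩ).mono fun x hx => hF x hx (u x))
    _ = c₁ * ∫ x in Ω, |u x| ^ q x := integral_const_mul _ _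
    _ ≤ c₁ * A := by
        gcongr
        rw [integral_eq_lintegral_of_nonneg_ae hnonneg hmeas]
        exact ENNReal.toReal_le_of_le_ofReal hA h

theorem integral_Ff_le_of_normq_lt (hΩ : MeasurableSet Ω) (hu : Measurable u)
    (hq : AEMeasurable q (volume.restrict Ω)) (hq0 : ∀ x ∈ Ω, 0 ≤ q x)
    (hqp : ∀ x ∈ Ω, q x ≤ qp) {f : Eucl N → ℝ → ℝ} {c₁ K : ℝ} (hc₁ : 0 ≤ c₁)
    (hF : ∀ x ∈ Ω, ∀ t : ℝ, |Ff f x t| ≤ c₁ * |t| ^ q x) (hK : 1 ≤ K)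
    (h : normq Ω q u < ENNReal.ofReal K) :
    ∫ x in Ω, Ff f x (u x) ≤ c₁ * K ^ qp := by
  obtain ⟨l, hl, hlK, hint⟩ := exists_lintegral_div_rpow_le_one_of_normq_lt h
  exact integral_Ff_le hΩ hu hq hc₁ hF (by positivity)
    (lintegral_rpow_le_of_lintegral_div_rpow_le_one hΩ hq0 hqp hl hlK.le hK hint)

end VariableExponent

theorem tendsto_mul_rpow_sub_mul_rpow_atTop {p r : ℝ} (hr : 0 < r) (hrp : r < p)
    {A : ℝ} (hA : 0 < A) (B : ℝ) :
    Tendsto (fun T : ℝ => A * T ^ p - B * T ^ r) atTop atTop := by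
  have hprod : Tendsto (fun T : ℝ => T ^ r * (A * T ^ (p - r) - B)) atTop atTop :=
    (tendsto_rpow_atTop hr).atTop_mul_atTop₀ (tendsto_atTop_add_const_right _ _
      ((tendsto_rpow_atTop (by linarith)).const_mul_atTop hA))
  refine hprod.congr' ?_
  filter_upwards [eventually_gt_atTop 0] with T hT
  rw [mul_sub, mul_left_comm, ← Real.rpow_add hT, add_sub_cancel, mul_comm (T ^ r)]

theorem le_Jlam_of_two_le_toReal_normM {Ω : Set (Eucl N)} (hΩ : MeasurableSet Ω)
    {s : ℝ} {a : Eucl N → Eucl N → ℝ → ℝ} (hmono : ∀ x y, StrictMono (phiF a x y))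
    (hcont : ∀ x y, Continuous (phiF a x y)) {β : Eucl N → ℝ}
    (hβ0 : ∀ᵐ x ∂(volume.restrict Ωᶜ), 0 ≤ β x) {φm φp : ℝ}
    (hΦ1 : ∀ x y t, 0 < t →
      φm ≤ t * phiF a x y t / PhiF a x y t ∧ t * phiF a x y t / PhiF a x y t ≤ φp)
    {q : Eucl N → ℝ} (hq : AEMeasurable q (volume.restrict Ω)) (hq0 : ∀ x ∈ Ω, 0 ≤ q x)
    {qp : ℝ} (hqp : ∀ x ∈ Ω, q x ≤ qp) {f : Eucl N → ℝ → ℝ} {c₁ : ℝ} (hc₁ : 0 ≤ c₁)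
    (hF : ∀ x ∈ Ω, ∀ t : ℝ, |Ff f x t| ≤ c₁ * |t| ^ q x) {c lam : ℝ} (hc : 0 ≤ c)
    (hlam : 0 ≤ lam) {u : Eucl N → ℝ} (hu : Measurable u)
    (hemb : normq Ω q u ≤ ENNReal.ofReal c * normM a s Ω β u)
    (hT : 2 ≤ (normM a s Ω β u).toReal) :
    1 / 2 * ((normM a s Ω β u).toReal / 2) ^ φm
        - lam * (c₁ * ((c + 1) * (normM a s Ω β u).toReal) ^ qp)
      ≤ Jlam a s Ω β f lam u := by
  have hfin : normM a s Ω β u < ⊤ := lt_top_iff_ne_top.2 fun htop => by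
    rw [htop, ENNReal.toReal_top] at hT
    norm_num at hT
  set T := (normM a s Ω β u).toReal
  have hT_eq : ENNReal.ofReal T = normM a s Ω β u := ENNReal.ofReal_toReal hfin.ne
  have hρ := rhoS_ne_top_of_normM_lt_top hmono hcont hΦ1 hβ0 hfin
  have hρ_ge : (T / 2) ^ φm ≤ (rhoS a s Ω β u).toReal :=
    (ENNReal.ofReal_le_iff_le_toReal hρ).1 <|
      ofReal_rpow_le_rhoS_of_ofReal_lt_normM hmono hcont hΦ1 hβ0 (by linarith) <| by
        rw [← hT_eq, ENNReal.ofReal_lt_ofReal_iff (by linarith)]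
        linarith
  have hF_le : ∫ x in Ω, Ff f x (u x) ≤ c₁ * ((c + 1) * T) ^ qp :=
    integral_Ff_le_of_normq_lt hΩ hu hq hq0 hqp hc₁ hF (by nlinarith) <| hemb.trans_lt <| by
      rw [← hT_eq, ← ENNReal.ofReal_mul hc, ENNReal.ofReal_lt_ofReal_iff (by positivity)]
      linarith
  linarith [half_toReal_rhoS_sub_le_Jlam (f := f) (lam := lam) hρ,
    mul_le_mul_of_nonneg_left hF_le hlam]

theorem statement13_general
    (N : ℕ)
    (Ω : Set (Eucl N)) (hΩo : IsOpen Ω) (hΩne : Ω.Nonempty)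
    (s : ℝ)
    (a : Eucl N → Eucl N → ℝ → ℝ)
    (hmono : ∀ x y, StrictMono (phiF a x y))
    (hcont : ∀ x y, Continuous (phiF a x y))
    (β : Eucl N → ℝ)
    (hβ0 : ∀ᵐ x ∂(volume.restrict Ωᶜ), 0 ≤ β x)
    (φm φp : ℝ)
    (hΦ1 : ∀ x y t, 0 < t →
      φm ≤ t * phiF a x y t / PhiF a x y t ∧ t * phiF a x y t / PhiF a x y t ≤ φp)
    (q : Eucl N → ℝ) (hqc : ContinuousOn q (closure Ω)) (hq1 : ∀ x ∈ closure Ω, 1 < q x)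
    (qp : ℝ) (hqp_le : ∀ x ∈ closure Ω, q x ≤ qp)
    (f : Eucl N → ℝ → ℝ)
    (hqpφ : qp < φm)
    (c₁ : ℝ) (hc₁ : 0 < c₁)
    (hF : ∀ x ∈ Ω, ∀ t : ℝ, |Ff f x t| ≤ c₁ * |t| ^ q x)
    (c : ℝ) (hc : 0 < c)
    (hemb : ∀ u ∈ XsetM a s Ω β, normq Ω q u ≤ ENNReal.ofReal c * normM a s Ω β u) :
    ∀ lam : ℝ, 0 < lam → ∀ M : ℝ, ∃ R : ℝ, 0 < R ∧
      ∀ u ∈ XsetM a s Ω β, ENNReal.ofReal R ≤ normM a s Ω β u →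
        M ≤ Jlam a s Ω β f lam u := by
  intro lam hlam M
  obtain ⟨x₀, hx₀⟩ := hΩne
  have hqp0 : 0 < qp := by
    linarith [hq1 x₀ (subset_closure hx₀), hqp_le x₀ (subset_closure hx₀)]
  have hgrowth : Tendsto (fun T => 1 / 2 * (T / 2) ^ φm - lam * (c₁ * ((c + 1) * T) ^ qp))
      atTop atTop := by
    refine (tendsto_mul_rpow_sub_mul_rpow_atTop hqp0 hqpφ (A := 1 / 2 / 2 ^ φm) (by positivity)
      (lam * c₁ * (c + 1) ^ qp)).congr' ?_
    filter_upwards [eventually_ge_atTop 0] with T hT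
    rw [Real.div_rpow hT zero_le_two, Real.mul_rpow (by positivity) hT]
    ring
  obtain ⟨R₀, hR₀⟩ := eventually_atTop.1 (hgrowth.eventually_ge_atTop M)
  refine ⟨max R₀ 2, by positivity, fun u hu hRu => ?_⟩
  have hRT : max R₀ 2 ≤ (normM a s Ω β u).toReal :=
    (ENNReal.ofReal_le_iff_le_toReal hu.2.2.ne).1 hRu
  exact (hR₀ _ ((le_max_left _ _).trans hRT)).trans <|
    le_Jlam_of_two_le_toReal_normM hΩo.measurableSet hmono hcont hβ0 hΦ1
      ((hqc.mono subset_closure).aemeasurable hΩo.measurableSet)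
      (fun x hx => (zero_lt_one.trans (hq1 x (subset_closure hx))).le)
      (fun x hx => hqp_le x (subset_closure hx)) hc₁.le hF hc.le hlam.le hu.1 (hemb u hu)
      ((le_max_right _ _).trans hRT)

/-- for every `λ > 0` the functional `J_λ` is coercive on `X`. -/
theorem statement13
    (N : ℕ) (hN : 1 ≤ N)
    (Ω : Set (Eucl N)) (hΩo : IsOpen Ω) (hΩb : Bornology.IsBounded Ω) (hΩne : Ω.Nonempty)
    (s : ℝ) (hs : s ∈ Set.Ioo (0:ℝ) 1)
    (a : Eucl N → Eucl N → ℝ → ℝ)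
    (ha : Measurable fun p : Eucl N × Eucl N × ℝ => a p.1 p.2.1 p.2.2)
    (hmono : ∀ x y, StrictMono (phiF a x y))
    (hcont : ∀ x y, Continuous (phiF a x y))
    (hsurj : ∀ x y, Function.Surjective (phiF a x y))
    (β : Eucl N → ℝ) (hβm : Measurable β)
    (hβb : ∃ C : ℝ, ∀ᵐ x ∂(volume.restrict Ωᶜ), |β x| ≤ C)
    (hβ0 : ∀ᵐ x ∂(volume.restrict Ωᶜ), 0 ≤ β x)
    (φm φp : ℝ) (hφm : 1 < φm) (hφmp : φm ≤ φp)
    (hΦ1 : ∀ x y t, 0 < t →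
      φm ≤ t * phiF a x y t / PhiF a x y t ∧ t * phiF a x y t / PhiF a x y t ≤ φp)
    (q : Eucl N → ℝ) (hqc : ContinuousOn q (closure Ω)) (hq1 : ∀ x ∈ closure Ω, 1 < q x)
    (qp : ℝ) (hqp_le : ∀ x ∈ closure Ω, q x ≤ qp)
    (f : Eucl N → ℝ → ℝ)
    (hfmeas : ∀ t : ℝ, Measurable fun x => f x t)
    (hfcont : ∀ x : Eucl N, Continuous fun t => f x t)
    (hqpφ : qp < φm)
    (c₁ : ℝ) (hc₁ : 0 < c₁)
    (hF : ∀ x ∈ Ω, ∀ t : ℝ, |Ff f x t| ≤ c₁ * |t| ^ q x)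
    (c : ℝ) (hc : 0 < c)
    (hemb : ∀ u ∈ XsetM a s Ω β, normq Ω q u ≤ ENNReal.ofReal c * normM a s Ω β u) :
    ∀ lam : ℝ, 0 < lam → ∀ M : ℝ, ∃ R : ℝ, 0 < R ∧
      ∀ u ∈ XsetM a s Ω β, ENNReal.ofReal R ≤ normM a s Ω β u →
        M ≤ Jlam a s Ω β f lam u :=
  statement13_general N Ω hΩo hΩne s a hmono hcont β hβ0 φm φp hΦ1 q hqc hq1 qp hqp_le f hqpφ c₁ hc₁
    hF c hc hemb
end
end

section
/- Let p ≥ 2 be a real number, φ(t) := p·log(1 + t)·t^{p−1} for t ≥ 0, and Φ(t) := ∫₀ᵗ φ(τ) dτ. Then: (i) Φ(t) = log(1 + t)·t^p − ∫₀ᵗ τ^p/(1 + τ) dτ for all t ≥ 0; (ii) p·Φ(t) ≤ t·φ(t) for all t ≥ 0; (iii) lim_{t→∞} t·φ(t)/Φ(t) = p; (iv) lim_{t→0⁺} t·φ(t)/Φ(t) = p + 1. -/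
/-!
Integrating by parts, `Φ t = L t ^ p - R t` with `L = log (1 + t)` and `R t = ∫₀ᵗ τ^p/(1+τ) dτ ≥ 0`,
while `t * φ t = p * L t ^ p`; this gives (i) and (ii), and
`t * φ t / Φ t = p / (1 - R t / (L t ^ p))`. At infinity `R t ≤ t ^ p / p` while `L → ∞`, so the
quotient `R t / (L t ^ p)` tends to `0`; at `0⁺`, `L ~ t` and `R t ~ t ^ (p + 1) / (p + 1)`, so it
tends to `1 / (p + 1)`.
-/

open Real Filter Set intervalIntegral Topology

noncomputable section

namespace LogOneAddRpow

def correction (p t : ℝ) : ℝ := ∫ τ in (0:ℝ)..t, τ ^ p / (1 + τ)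

lemma continuousOn_rpow_div_one_add {p : ℝ} (hp : 0 ≤ p) (t : ℝ) :
    ContinuousOn (fun τ : ℝ => τ ^ p / (1 + τ)) (Icc 0 t) :=
  (continuous_rpow_const hp).continuousOn.div (by fun_prop) fun τ hτ => by
    linarith [hτ.1]

lemma continuousOn_log_one_add (t : ℝ) :
    ContinuousOn (fun τ : ℝ => log (1 + τ)) (Icc 0 t) :=
  ContinuousOn.log (by fun_prop) fun τ hτ => by linarith [hτ.1]

lemma intervalIntegrable_rpow_div_one_add {p : ℝ} (hp : 0 ≤ p) {t : ℝ} (ht : 0 ≤ t) :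
    IntervalIntegrable (fun τ : ℝ => τ ^ p / (1 + τ)) MeasureTheory.volume 0 t :=
  (uIcc_of_le ht ▸ continuousOn_rpow_div_one_add hp t).intervalIntegrable

lemma hasDerivAt_log_one_add_mul_rpow {p τ : ℝ} (hp : 1 ≤ p) (hτ : -1 < τ) :
    HasDerivAt (fun x => log (1 + x) * x ^ p)
      (τ ^ p / (1 + τ) + p * log (1 + τ) * τ ^ (p - 1)) τ := by
  have hlog : HasDerivAt (fun x : ℝ => log (1 + x)) (1 + τ)⁻¹ τ := by
    simpa using ((hasDerivAt_id' τ).const_add 1).log (by linarith)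
  exact (hlog.mul (hasDerivAt_rpow_const (Or.inr hp))).congr_deriv (by ring)

theorem integral_mul_log_one_add_mul_rpow {p t : ℝ} (hp : 1 ≤ p) (ht : 0 ≤ t) :
    ∫ τ in (0:ℝ)..t, p * log (1 + τ) * τ ^ (p - 1) = log (1 + t) * t ^ p - correction p t := by
  have hf := intervalIntegrable_rpow_div_one_add (p := p) (by linarith) ht
  have hg : IntervalIntegrable (fun τ : ℝ => p * log (1 + τ) * τ ^ (p - 1))
      MeasureTheory.volume 0 t := by
    refine ContinuousOn.intervalIntegrable ?_
    rw [uIcc_of_le ht]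
    exact (continuousOn_const.mul (continuousOn_log_one_add t)).mul
      (continuous_rpow_const (by linarith)).continuousOn
  have hFTC := integral_eq_sub_of_hasDerivAt
    (fun τ hτ => hasDerivAt_log_one_add_mul_rpow hp
      (by linarith [(uIcc_of_le ht ▸ hτ : τ ∈ Icc 0 t).1])) (hf.add hg)
  rw [integral_add hf hg] at hFTC
  simp only [add_zero, log_one, zero_mul, sub_zero] at hFTC
  rw [correction]
  linarith

lemma correction_nonneg (p : ℝ) {t : ℝ} (ht : 0 ≤ t) : 0 ≤ correction p t :=
  integral_nonneg ht fun τ hτ => by have := hτ.1; positivity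

lemma correction_le_rpow_div {p : ℝ} (hp : 0 < p) {t : ℝ} (ht : 0 ≤ t) :
    correction p t ≤ t ^ p / p := by
  calc correction p t ≤ ∫ τ in (0:ℝ)..t, τ ^ (p - 1) := by
        refine integral_mono_on ht (intervalIntegrable_rpow_div_one_add hp.le ht)
          (intervalIntegral.intervalIntegrable_rpow' (by linarith)) fun τ hτ => ?_
        obtain rfl | hτ0 := hτ.1.eq_or_lt
        · simp [zero_rpow hp.ne', rpow_nonneg le_rfl]
        have hsucc : τ ^ p = τ ^ (p - 1) * τ := by rw [← rpow_add_one hτ0.ne', sub_add_cancel]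
        rw [div_le_iff₀ (by linarith), hsucc]
        nlinarith [rpow_nonneg hτ0.le (p - 1)]
    _ = t ^ p / p := by
        rw [integral_rpow (Or.inl (by linarith)), sub_add_cancel, zero_rpow hp.ne', sub_zero]

lemma correction_le_rpow_add_one_div {p : ℝ} (hp : 0 ≤ p) {t : ℝ} (ht : 0 ≤ t) :
    correction p t ≤ t ^ (p + 1) / (p + 1) := by
  calc correction p t ≤ ∫ τ in (0:ℝ)..t, τ ^ p := by
        refine integral_mono_on ht (intervalIntegrable_rpow_div_one_add hp ht)
          (intervalIntegral.intervalIntegrable_rpow' (by linarith)) fun τ hτ => ?_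
        have := hτ.1
        exact div_le_self (by positivity) (by linarith)
    _ = t ^ (p + 1) / (p + 1) := by
        rw [integral_rpow (Or.inl (by linarith)), zero_rpow (by linarith), sub_zero]

lemma rpow_add_one_div_le_correction {p : ℝ} (hp : 0 ≤ p) {t : ℝ} (ht : 0 ≤ t) :
    t ^ (p + 1) / ((p + 1) * (1 + t)) ≤ correction p t := by
  calc t ^ (p + 1) / ((p + 1) * (1 + t)) = ∫ τ in (0:ℝ)..t, τ ^ p / (1 + t) := by
        rw [intervalIntegral.integral_div, integral_rpow (Or.inl (by linarith)),
          zero_rpow (by linarith), sub_zero, div_div]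
    _ ≤ correction p t := by
        refine integral_mono_on ht
          ((intervalIntegral.intervalIntegrable_rpow' (by linarith)).div_const _)
          (intervalIntegrable_rpow_div_one_add hp ht) fun τ hτ => ?_
        have := hτ.1
        gcongr
        exact hτ.2

lemma log_one_add_le_self {t : ℝ} (ht : -1 < t) : log (1 + t) ≤ t := by
  linarith [log_le_sub_one_of_pos (show 0 < 1 + t by linarith)]

theorem tendsto_correction_div_atTop {p : ℝ} (hp : 0 < p) :
    Tendsto (fun t => correction p t / (log (1 + t) * t ^ p)) atTop (𝓝 0) := by
  have hlog : Tendsto (fun t : ℝ => log (1 + t)) atTop atTop :=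
    tendsto_log_atTop.comp (tendsto_atTop_add_const_left atTop 1 tendsto_id)
  refine tendsto_of_tendsto_of_tendsto_of_le_of_le' tendsto_const_nhds
    (tendsto_inv_atTop_zero.comp (hlog.const_mul_atTop hp)) ?_ ?_
  · filter_upwards [eventually_ge_atTop 0] with t ht
    have := correction_nonneg p ht
    have := log_nonneg (show 1 ≤ 1 + t by linarith)
    positivity
  · filter_upwards [hlog.eventually_gt_atTop 0, eventually_gt_atTop 0] with t hL ht
    have htp := rpow_pos_of_pos ht p
    rw [Function.comp_apply, div_le_iff₀ (by positivity)]
    calc correction p t ≤ t ^ p / p := correction_le_rpow_div hp ht.le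
      _ = (p * log (1 + t))⁻¹ * (log (1 + t) * t ^ p) := by field_simp

theorem tendsto_correction_div_nhdsGT_zero {p : ℝ} (hp : 0 ≤ p) :
    Tendsto (fun t => correction p t / (log (1 + t) * t ^ p)) (𝓝[>] 0) (𝓝 (1 / (p + 1))) := by
  have hlim : ∀ f : ℝ → ℝ, ContinuousAt f 0 → f 0 = 1 / (p + 1) →
      Tendsto f (𝓝[>] 0) (𝓝 (1 / (p + 1))) := fun f hf h0 =>
    h0 ▸ hf.tendsto.mono_left nhdsWithin_le_nhds
  refine tendsto_of_tendsto_of_tendsto_of_le_of_le'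
    (hlim (fun t => 1 / ((p + 1) * (1 + t))) (by fun_prop (disch := positivity)) (by simp))
    (hlim (fun t => (t + 2) / (2 * (p + 1))) (by fun_prop) (by field_simp; norm_num)) ?_ ?_
  all_goals
    filter_upwards [self_mem_nhdsWithin] with t (ht : 0 < t)
    have htp := rpow_pos_of_pos ht p
    have hsucc : t ^ (p + 1) = t * t ^ p := by rw [rpow_add_one ht.ne', mul_comm]
    have hL : 0 < log (1 + t) := log_pos (by linarith)
  · rw [le_div_iff₀ (by positivity)]
    calc 1 / ((p + 1) * (1 + t)) * (log (1 + t) * t ^ p)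
        ≤ 1 / ((p + 1) * (1 + t)) * (t * t ^ p) := by
          gcongr; exact log_one_add_le_self (by linarith)
      _ = t ^ (p + 1) / ((p + 1) * (1 + t)) := by rw [hsucc]; ring
      _ ≤ correction p t := rpow_add_one_div_le_correction hp ht.le
  · rw [div_le_div_iff₀ (by positivity) (by positivity)]
    calc correction p t * (2 * (p + 1)) ≤ t ^ (p + 1) / (p + 1) * (2 * (p + 1)) := by
          gcongr; exact correction_le_rpow_add_one_div hp ht.le
      _ = (t + 2) * (2 * t / (t + 2) * t ^ p) := by rw [hsucc]; field_simp
      _ ≤ (t + 2) * (log (1 + t) * t ^ p) := by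
          gcongr; exact le_log_one_add_of_nonneg ht.le

end LogOneAddRpow

open LogOneAddRpow in
/-- properties of `φ(t) = p log(1+t) t^{p−1}` and its primitive `Φ`. -/
theorem statement16 (p : ℝ) (hp : 2 ≤ p)
    (φ : ℝ → ℝ) (hφ : ∀ t ≥ (0:ℝ), φ t = p * Real.log (1 + t) * t ^ (p - 1))
    (Φ : ℝ → ℝ) (hΦ : ∀ t : ℝ, Φ t = ∫ τ in (0:ℝ)..t, φ τ) :
    (∀ t ≥ (0:ℝ), Φ t = Real.log (1 + t) * t ^ p - ∫ τ in (0:ℝ)..t, τ ^ p / (1 + τ)) ∧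
    (∀ t ≥ (0:ℝ), p * Φ t ≤ t * φ t) ∧
    Tendsto (fun t => t * φ t / Φ t) atTop (nhds p) ∧
    Tendsto (fun t => t * φ t / Φ t) (nhdsWithin 0 (Set.Ioi 0)) (nhds (p + 1)) := by
  have hp0 : 0 < p := by linarith
  have hΦ_eq (t : ℝ) (ht : 0 ≤ t) : Φ t = log (1 + t) * t ^ p - correction p t := by
    rw [hΦ, ← integral_mul_log_one_add_mul_rpow (by linarith) ht]
    exact integral_congr fun τ hτ => hφ τ (uIcc_of_le ht ▸ hτ).1
  have hmul_φ (t : ℝ) (ht : 0 ≤ t) : t * φ t = p * (log (1 + t) * t ^ p) := by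
    rw [hφ t ht, ← sub_add_cancel p 1, rpow_add' ht (by simpa using hp0.ne'), rpow_one]
    ring_nf
  have hratio (t : ℝ) (ht : 0 < t) :
      t * φ t / Φ t = p / (1 - correction p t / (log (1 + t) * t ^ p)) := by
    have : log (1 + t) * t ^ p ≠ 0 := (mul_pos (log_pos (by linarith)) (rpow_pos_of_pos ht p)).ne'
    rw [hmul_φ t ht.le, hΦ_eq t ht.le, one_sub_div this, div_div_eq_mul_div]
  have hlim {l : Filter ℝ} {c : ℝ} (hl : ∀ᶠ t in l, 0 < t)
      (hc : Tendsto (fun t => correction p t / (log (1 + t) * t ^ p)) l (𝓝 c)) (hc1 : c ≠ 1) :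
      Tendsto (fun t => t * φ t / Φ t) l (𝓝 (p / (1 - c))) :=
    (tendsto_const_nhds.div (tendsto_const_nhds.sub hc) (sub_ne_zero.2 hc1.symm)).congr'
      (hl.mono fun t ht => (hratio t ht).symm)
  refine ⟨hΦ_eq, fun t ht => ?_, ?_, ?_⟩
  · rw [hΦ_eq t ht, hmul_φ t ht]
    nlinarith [correction_nonneg p ht]
  · simpa using hlim (eventually_gt_atTop 0) (tendsto_correction_div_atTop hp0) zero_ne_one
  · convert hlim (l := 𝓝[>] 0) self_mem_nhdsWithin (tendsto_correction_div_nhdsGT_zero hp0.le)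
      ((div_lt_one (by linarith)).2 (by linarith)).ne using 2
    rw [one_sub_div (by linarith), add_sub_cancel_right, div_div_eq_mul_div,
      mul_div_cancel_left₀ _ hp0.ne']
end
end

section
/- Let p ≥ 2 be a real number, φ(t) := p·log(1 + t)·t^{p−1} for t ≥ 0, and Φ(t) := ∫₀ᵗ φ(τ) dτ. Then the function t ↦ Φ(√t) is convex on [0, ∞). -/
open Real Set

noncomputable section

/-! The derivative of `t ↦ ∫₀^{√t} g` is `g(√t) / (2√t)`, so the map is convex as soon as
`s ↦ g s / s` is monotone on `(0, ∞)`. For `g = φ` this quotient is `p log(1 + s) s^{p-2}`, a product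
of nonnegative nondecreasing functions when `p ≥ 2`. -/

theorem hasDerivAt_integral_sqrt {g : ℝ → ℝ} (hg : Continuous g) {t : ℝ} (ht : 0 < t) :
    HasDerivAt (fun t => ∫ τ in (0:ℝ)..√t, g τ) (1 / 2 * (g √t / √t)) t := by
  refine ((hg.integral_hasStrictDerivAt 0 √t).hasDerivAt.comp t
    (hasDerivAt_sqrt ht.ne')).congr_deriv ?_
  ring

theorem convexOn_integral_sqrt {g : ℝ → ℝ} (hg : ContinuousOn g (Ici 0))
    (hmono : MonotoneOn (fun s => g s / s) (Ioi 0)) :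
    ConvexOn ℝ (Ici 0) fun t => ∫ τ in (0:ℝ)..√t, g τ := by
  -- Only the values of `g` on `[0, ∞)` matter, so we may replace `g` by a continuous function.
  set h : ℝ → ℝ := fun x => g (max x 0)
  have hh : Continuous h := hg.comp_continuous (by fun_prop) fun x => le_max_right x 0
  have heq : (fun t => ∫ τ in (0:ℝ)..√t, g τ) = fun t => ∫ τ in (0:ℝ)..√t, h τ := by
    funext t
    refine intervalIntegral.integral_congr fun τ hτ => ?_
    rw [uIcc_of_le (sqrt_nonneg t)] at hτ
    simp only [h, max_eq_left hτ.1]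
  have hderiv : ∀ t > 0, HasDerivAt (fun t => ∫ τ in (0:ℝ)..√t, h τ) (1 / 2 * (g √t / √t)) t :=
    fun t ht => by
      simpa only [h, max_eq_left (sqrt_nonneg t)] using hasDerivAt_integral_sqrt hh ht
  rw [heq]
  refine MonotoneOn.convexOn_of_deriv (convex_Ici 0) ?_ ?_ ?_
  · exact ((intervalIntegral.continuous_primitive (fun _ _ => hh.intervalIntegrable _ _) 0).comp
      continuous_sqrt).continuousOn
  · rw [interior_Ici]
    exact fun t ht => (hderiv t ht).differentiableAt.differentiableWithinAt
  · rw [interior_Ici]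
    intro a ha b hb hab
    rw [(hderiv a ha).deriv, (hderiv b hb).deriv]
    exact mul_le_mul_of_nonneg_left
      (hmono (sqrt_pos.2 ha) (sqrt_pos.2 hb) (sqrt_le_sqrt hab)) (by norm_num)

theorem monotoneOn_log_one_add_mul_rpow {q : ℝ} (hq : 0 ≤ q) :
    MonotoneOn (fun s => log (1 + s) * s ^ q) (Ici 0) :=
  MonotoneOn.mul (f := fun s => log (1 + s)) (g := fun s : ℝ => s ^ q)
    (fun a ha _ _ hab => log_le_log (by linarith [mem_Ici.1 ha]) (by linarith))
    (fun _ ha _ _ hab => rpow_le_rpow ha hab hq)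
    (fun _ hs => log_nonneg (by linarith [mem_Ici.1 hs]))
    (fun _ hs => rpow_nonneg hs q)

/-- for `φ(t) = p log(1+t) t^{p−1}` with primitive `Φ`, the map
`t ↦ Φ(√t)` is convex on `[0,∞)`. -/
theorem statement17 (p : ℝ) (hp : 2 ≤ p)
    (φ : ℝ → ℝ) (hφ : ∀ t ≥ (0:ℝ), φ t = p * Real.log (1 + t) * t ^ (p - 1))
    (Φ : ℝ → ℝ) (hΦ : ∀ t : ℝ, Φ t = ∫ τ in (0:ℝ)..t, φ τ) :
    ConvexOn ℝ (Set.Ici 0) fun t => Φ (Real.sqrt t) := by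
  have hcont : ContinuousOn φ (Ici 0) := by
    refine ContinuousOn.congr (f := fun t => p * log (1 + t) * t ^ (p - 1)) ?_ hφ
    refine ContinuousOn.mul (by fun_prop (disch := intro t ht; linarith [mem_Ici.1 ht])) ?_
    exact continuousOn_id.rpow_const fun _ _ => Or.inr (by linarith)
  have hquot : EqOn (fun s => p * (log (1 + s) * s ^ (p - 2))) (fun s => φ s / s) (Ioi 0) := by
    intro s hs
    have hs : 0 < s := hs
    simp only [hφ s hs.le, show p - 1 = p - 2 + 1 by ring, rpow_add_one hs.ne']
    field_simp
  have hmono : MonotoneOn (fun s => φ s / s) (Ioi 0) := by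
    intro a ha b hb hab
    rw [← hquot ha, ← hquot hb]
    exact mul_le_mul_of_nonneg_left (monotoneOn_log_one_add_mul_rpow (by linarith)
      (mem_Ici_of_Ioi ha) (mem_Ici_of_Ioi hb) hab) (by linarith)
  simp only [hΦ]
  exact convexOn_integral_sqrt hcont hmono
end
end
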